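/- Let n ∈ ℕ and let P be an n×n complex matrix that is unitary and satisfies P · conj(P) = 1 (where conj(P) denotes entrywise complex conjugation). Then there exists an orthonormal basis X_1, …, X_n of ℂ^n (with respect to the standard Hermitian inner product) such that P · conj(X_i) = X_i for every i. -/

import Mathlib

/-! The operator `T ψ = P ⬝ conj ψ` is an antiunitary involution. The inner product of two
`T`-fixed vectors equals its own conjugate, so it is real; and every `x` splits as
`(x + T x)/2 + i • (-i (x - T x)/2)` with both parts fixed. Hence a real orthonormal basis of
the real subspace of fixed vectors is orthonormal over `ℂ` and spans `ℂⁿ` over `ℂ`. -/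

open Matrix

section Antiunitary

open scoped InnerProductSpace

attribute [local instance] InnerProductSpace.complexToReal

variable {E : Type*} [NormedAddCommGroup E] [InnerProductSpace ℂ E]

def fixedRealSubmodule (f : E →ₗ⋆[ℂ] E) : Submodule ℝ E where
  carrier := {v | f v = v}
  add_mem' {u v} hu hv := by simp_all only [Set.mem_ofPred_eq, map_add]
  zero_mem' := map_zero f
  smul_mem' r v hv := by
    change f (r • v) = r • v
    rw [← Complex.coe_smul, map_smulₛₗ, Complex.conj_ofReal, hv]

variable {f : E →ₗ⋆[ℂ] E}

theorem mem_fixedRealSubmodule {v : E} : v ∈ fixedRealSubmodule f ↔ f v = v := Iff.rfl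

theorem span_fixedRealSubmodule (hf : ∀ v, f (f v) = v) :
    Submodule.span ℂ (fixedRealSubmodule f : Set E) = ⊤ := by
  refine eq_top_iff.mpr fun x _ => ?_
  have hu : (2⁻¹ : ℂ) • (x + f x) ∈ fixedRealSubmodule f := by
    rw [mem_fixedRealSubmodule, map_smulₛₗ, map_add, hf, add_comm]
    simp [map_ofNat]
  have hw : (-(2⁻¹ * Complex.I)) • (x - f x) ∈ fixedRealSubmodule f := by
    rw [mem_fixedRealSubmodule, map_smulₛₗ, map_sub, hf, ← neg_sub, smul_neg, ← neg_smul]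
    simp [map_ofNat]
  have hx : x = (2⁻¹ : ℂ) • (x + f x) + Complex.I • ((-(2⁻¹ * Complex.I)) • (x - f x)) := by
    linear_combination (norm := module) ((2⁻¹ : ℂ) * Complex.I_mul_I) • (x - f x)
  rw [hx]
  exact Submodule.add_mem _ (Submodule.subset_span hu)
    (Submodule.smul_mem _ _ (Submodule.subset_span hw))

theorem inner_eq_real_inner_of_mem_fixedRealSubmodule
    (hinner : ∀ u v, ⟪f u, f v⟫_ℂ = ⟪v, u⟫_ℂ) {u v : E}
    (hu : u ∈ fixedRealSubmodule f) (hv : v ∈ fixedRealSubmodule f) :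
    ⟪u, v⟫_ℂ = (⟪u, v⟫_ℝ : ℂ) := by
  have hconj : starRingEnd ℂ ⟪u, v⟫_ℂ = ⟪u, v⟫_ℂ := by
    rw [inner_conj_symm, ← hinner, hu, hv]
  rw [real_inner_eq_re_inner ℂ]
  exact (Complex.conj_eq_iff_re.mp hconj).symm

theorem exists_orthonormalBasis_forall_apply_eq_self [FiniteDimensional ℂ E]
    (hf : ∀ v, f (f v) = v) (hinner : ∀ u v, ⟪f u, f v⟫_ℂ = ⟪v, u⟫_ℂ) :
    ∃ b : OrthonormalBasis (Fin (Module.finrank ℂ E)) ℂ E, ∀ i, f (b i) = b i := by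
  set V := fixedRealSubmodule f
  let bV := stdOrthonormalBasis ℝ V
  let g : Fin (Module.finrank ℝ V) → E := fun i => bV i
  have horth : Orthonormal ℂ g := by
    refine orthonormal_iff_ite.mpr fun i j => ?_
    rw [inner_eq_real_inner_of_mem_fixedRealSubmodule hinner (bV i).2 (bV j).2,
      ← Submodule.coe_inner, orthonormal_iff_ite.mp bV.orthonormal i j]
    split_ifs <;> simp
  have hspan : ⊤ ≤ Submodule.span ℂ (Set.range g) := by
    have hV : (V : Set E) ⊆ Submodule.span ℂ (Set.range g) := by
      have : Submodule.span ℝ (Set.range g) = V := by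
        rw [Set.range_comp', ← Submodule.coe_subtype, Submodule.span_image, ← bV.coe_toBasis,
          bV.toBasis.span_eq, Submodule.map_subtype_top]
      exact fun v hv => Submodule.span_le_restrictScalars ℝ ℂ _ (this.ge hv)
    rw [← span_fixedRealSubmodule hf]
    exact Submodule.span_le.mpr hV
  let b := OrthonormalBasis.mk horth hspan
  have hdim : Module.finrank ℝ V = Module.finrank ℂ E := by
    simpa using (Module.finrank_eq_card_basis b.toBasis).symm
  refine ⟨b.reindex (finCongr hdim), fun i => ?_⟩
  rw [OrthonormalBasis.reindex_apply, OrthonormalBasis.coe_mk]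
  exact (bV _).2

end Antiunitary

namespace Matrix

variable {ι : Type*} [Fintype ι]

/-- The PT operator `ψ ↦ P ⬝ conj ψ` of the paper, as a conjugate-linear map. -/
def conjMulVecₗ (P : Matrix ι ι ℂ) :
    EuclideanSpace ℂ ι →ₗ⋆[ℂ] EuclideanSpace ℂ ι where
  toFun v := WithLp.toLp 2 (P *ᵥ star v.ofLp)
  map_add' u v := by simp only [WithLp.ofLp_add, star_add, mulVec_add, WithLp.toLp_add]
  map_smul' c v := by
    simp only [WithLp.ofLp_smul, star_smul, mulVec_smul, WithLp.toLp_smul]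
    rfl

theorem conjMulVecₗ_apply (P : Matrix ι ι ℂ) (v : EuclideanSpace ℂ ι) :
    (conjMulVecₗ P v).ofLp = P *ᵥ star v.ofLp := rfl

theorem star_mulVec_star (P : Matrix ι ι ℂ) (v : ι → ℂ) :
    star (P *ᵥ star v) = P.map (starRingEnd ℂ) *ᵥ v := by
  ext i
  simpa [Function.comp_def] using RingHom.map_mulVec (starRingEnd ℂ) P (star v) i

variable [DecidableEq ι]

theorem conjMulVecₗ_conjMulVecₗ {P : Matrix ι ι ℂ} (hP : P * P.map (starRingEnd ℂ) = 1)
    (v : EuclideanSpace ℂ ι) : conjMulVecₗ P (conjMulVecₗ P v) = v := by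
  ext1
  rw [conjMulVecₗ_apply, conjMulVecₗ_apply, star_mulVec_star, mulVec_mulVec, hP, one_mulVec]

theorem inner_conjMulVecₗ {P : Matrix ι ι ℂ} (hP : Pᴴ * P = 1) (u v : EuclideanSpace ℂ ι) :
    inner ℂ (conjMulVecₗ P u) (conjMulVecₗ P v) = inner ℂ v u := by
  rw [EuclideanSpace.inner_eq_star_dotProduct, EuclideanSpace.inner_eq_star_dotProduct,
    conjMulVecₗ_apply, conjMulVecₗ_apply, star_mulVec, star_star, dotProduct_comm,
    ← dotProduct_mulVec, mulVec_mulVec, hP, one_mulVec]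

end Matrix

/-- Matrix form of Lemma 1 of the paper: if `P` is unitary and the antilinear PT operator
`ψ ↦ P ⬝ conj ψ` squares to the identity (`P ⬝ conj P = 1`), then there is an orthonormal
basis of `ℂ^n` consisting of PT-fixed vectors. -/
theorem stmt_1 (n : ℕ) (P : Matrix (Fin n) (Fin n) ℂ)
    (hU : P * Pᴴ = 1)
    (hPT : P * P.map (starRingEnd ℂ) = 1) :
    ∃ X : OrthonormalBasis (Fin n) ℂ (EuclideanSpace ℂ (Fin n)),
      ∀ i, P.mulVec (star ((WithLp.equiv 2 (Fin n → ℂ)) (X i))) =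
        (WithLp.equiv 2 (Fin n → ℂ)) (X i) := by
  obtain ⟨X, hX⟩ := exists_orthonormalBasis_forall_apply_eq_self (f := conjMulVecₗ P)
    (conjMulVecₗ_conjMulVecₗ hPT) (inner_conjMulVecₗ (mul_eq_one_comm.mp hU))
  refine ⟨X.reindex (finCongr finrank_euclideanSpace_fin), fun i => ?_⟩
  rw [OrthonormalBasis.reindex_apply]
  exact congrArg WithLp.ofLp (hX _)
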